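/- arXiv:1210.3542 — 2 statements merged into one kernel-verified Lean document; each statement's English description precedes it below -/
import Mathlib

section
/- Let M be a 2×2 complex matrix whose imaginary part (M − M*)/(2i) is positive definite. Then the double integral over (v₁, v₂) ∈ ℝ² of det(Im[(diag(v₁, v₂) − M)^{-1}]) dv₁ dv₂ is at most π². -/
/-!
Write `M = !![a, b; c, d]` and `A = diag(v₁, v₂) - M`. Since `Im (A⁻¹) = -A⁻¹ (Im A) A⁻*` and
`Im A = -Im M`, the integrand is `det (Im M) / |det A|²`, where `det A = (v₁ - a)(v₂ - d) - bc`
is affine in `v₁`. As `∫ |x β + γ|⁻² dx = π / |Im (β̄ γ)|`, integrating out `v₁` leaves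
`π / Q(v₂)` for a positive quadratic `Q`, and `∫ 1 / Q = 2π / √(-discrim Q)`. So the double
integral equals `2π² det (Im M) / √(-discrim Q)`, and `4 det (Im M)² ≤ -discrim Q` follows from
`det (Im M) > 0` and `|b|² + |c|² ≥ 2 |bc|`.
-/

open MeasureTheory Matrix
open scoped ComplexOrder

/-- The imaginary part `(M - M*)/(2i)` of a complex matrix. -/
noncomputable def matIm {n : Type*} [Fintype n] [DecidableEq n]
    (M : Matrix n n ℂ) : Matrix n n ℂ :=
  ((2 * Complex.I)⁻¹) • (M - Mᴴ)

open Complex ComplexConjugate Real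

namespace Matrix

variable {n : Type*} [Fintype n] [DecidableEq n]

lemma matIm_apply_self (M : Matrix n n ℂ) (i : n) : matIm M i i = (M i i).im := by
  rw [matIm, Matrix.smul_apply, Matrix.sub_apply, conjTranspose_apply, star_def, sub_conj,
    smul_eq_mul]
  push_cast
  field_simp

lemma matIm_sub_of_isHermitian {H : Matrix n n ℂ} (hH : H.IsHermitian) (M : Matrix n n ℂ) :
    matIm (H - M) = -matIm M := by
  rw [matIm, matIm, conjTranspose_sub, hH.eq, ← smul_neg, neg_sub, sub_sub_sub_cancel_left]

lemma star_dotProduct_matIm_mulVec (M : Matrix n n ℂ) (x : n → ℂ) :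
    star x ⬝ᵥ (matIm M *ᵥ x) = ((star x ⬝ᵥ (M *ᵥ x)).im : ℂ) := by
  have h : star x ⬝ᵥ (Mᴴ *ᵥ x) = conj (star x ⬝ᵥ (M *ᵥ x)) := by
    rw [mulVec_conjTranspose, star_dotProduct, star_star, dotProduct_mulVec, star_def]
  rw [matIm, smul_mulVec, dotProduct_smul, sub_mulVec, dotProduct_sub, h, sub_conj, smul_eq_mul]
  push_cast
  field_simp

/-- A kernel vector `x` of `H - M` would give `x* (Im M) x = -Im (x* (H - M) x) = 0`. -/
lemma isUnit_det_sub_of_posDef {H M : Matrix n n ℂ} (hH : H.IsHermitian)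
    (hM : (matIm M).PosDef) : IsUnit (H - M).det := by
  rw [isUnit_iff_ne_zero, Ne, ← exists_mulVec_eq_zero_iff]
  rintro ⟨x, hx, hHMx⟩
  have hpos := hM.dotProduct_mulVec_pos hx
  rw [← neg_neg (matIm M), ← matIm_sub_of_isHermitian hH, neg_mulVec, dotProduct_neg,
    star_dotProduct_matIm_mulVec, hHMx, dotProduct_zero] at hpos
  simp at hpos

lemma matIm_nonsing_inv {A : Matrix n n ℂ} (hA : IsUnit A.det) :
    matIm A⁻¹ = -(A⁻¹ * matIm A * A⁻¹ᴴ) := by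
  have hAH : IsUnit Aᴴ.det := by rw [det_conjTranspose]; exact hA.star
  rw [matIm, matIm, Matrix.mul_smul, Matrix.smul_mul, ← smul_neg, conjTranspose_nonsing_inv,
    Matrix.mul_sub, Matrix.sub_mul, nonsing_inv_mul A hA, Matrix.mul_assoc,
    mul_nonsing_inv _ hAH, one_mul, Matrix.mul_one, neg_sub]

lemma re_det_matIm_nonsing_inv_sub {H M : Matrix n n ℂ} (hH : H.IsHermitian)
    (hA : IsUnit (H - M).det) :
    (matIm (H - M)⁻¹).det.re = (matIm M).det.re / normSq (H - M).det := by
  rw [matIm_nonsing_inv hA, matIm_sub_of_isHermitian hH, Matrix.mul_neg, Matrix.neg_mul, neg_neg,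
    det_mul, det_mul, det_conjTranspose, det_nonsing_inv, Ring.inverse_eq_inv, mul_right_comm,
    star_def, mul_conj, normSq_inv, div_eq_mul_inv, re_ofReal_mul, mul_comm]

lemma re_det_matIm_fin_two (M : Matrix (Fin 2) (Fin 2) ℂ) :
    (matIm M).det.re = (M 0 0).im * (M 1 1).im - normSq (M 0 1 - conj (M 1 0)) / 4 := by
  simp [det_fin_two, matIm, normSq_apply]
  ring

end Matrix

lemma quadratic_pos_of_discrim_neg {a b c : ℝ} (ha : 0 < a) (hd : discrim a b c < 0) (x : ℝ) :
    0 < a * x ^ 2 + b * x + c := by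
  rw [discrim] at hd
  nlinarith [sq_nonneg (2 * a * x + b)]

/-- Completing the square. -/
lemma inv_quadratic_eq {a b c : ℝ} (ha : 0 < a) (hd : discrim a b c < 0) (x : ℝ) :
    (a * x ^ 2 + b * x + c)⁻¹ =
      4 * a / -discrim a b c * (1 + (2 * a / √(-discrim a b c) * (x - -b / (2 * a))) ^ 2)⁻¹ := by
  set k := -discrim a b c with hk
  have hk0 : 0 < k := neg_pos.2 hd
  rw [mul_pow, div_pow, sq_sqrt hk0.le, ← inv_div, ← mul_inv]
  congr 1
  field_simp
  rw [hk, discrim]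
  ring

lemma integrable_inv_quadratic {a b c : ℝ} (ha : 0 < a) (hd : discrim a b c < 0) :
    Integrable fun x : ℝ ↦ (a * x ^ 2 + b * x + c)⁻¹ := by
  have hr : 2 * a / √(-discrim a b c) ≠ 0 := by
    have := sqrt_pos.2 (neg_pos.2 hd)
    positivity
  simp only [inv_quadratic_eq ha hd]
  exact ((integrable_inv_one_add_sq.comp_mul_left' hr).comp_sub_right _).const_mul _

lemma integral_inv_quadratic {a b c : ℝ} (ha : 0 < a) (hd : discrim a b c < 0) :
    ∫ x : ℝ, (a * x ^ 2 + b * x + c)⁻¹ = 2 * π / √(-discrim a b c) := by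
  have hk : 0 < -discrim a b c := neg_pos.2 hd
  have hs : 0 < √(-discrim a b c) := sqrt_pos.2 hk
  simp only [inv_quadratic_eq ha hd]
  rw [integral_const_mul, integral_sub_right_eq_self (fun x ↦ (1 + (_ * x) ^ 2)⁻¹),
    Measure.integral_comp_mul_left (fun x ↦ (1 + x ^ 2)⁻¹), integral_univ_inv_one_add_sq,
    smul_eq_mul, abs_of_pos (by positivity)]
  have hd0 := hd.ne
  field_simp
  rw [sq_sqrt hk.le]
  ring

section AffineLine

variable {β γ : ℂ}

lemma normSq_ofReal_mul_add (β γ : ℂ) (x : ℝ) :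
    normSq (x * β + γ) = normSq β * x ^ 2 + 2 * (conj β * γ).re * x + normSq γ := by
  simp only [normSq_apply, add_re, add_im, mul_re, mul_im, ofReal_re, ofReal_im, conj_re, conj_im]
  ring

lemma discrim_normSq_ofReal_mul_add (β γ : ℂ) :
    discrim (normSq β) (2 * (conj β * γ).re) (normSq γ) = -(2 * (conj β * γ).im) ^ 2 := by
  have h : (conj β * γ).re ^ 2 + (conj β * γ).im ^ 2 = normSq β * normSq γ := by
    rw [sq, sq, ← normSq_apply, normSq_mul, normSq_conj]
  rw [discrim]
  linear_combination 4 * h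

lemma discrim_normSq_ofReal_mul_add_neg (h : (conj β * γ).im ≠ 0) :
    discrim (normSq β) (2 * (conj β * γ).re) (normSq γ) < 0 := by
  rw [discrim_normSq_ofReal_mul_add, neg_lt_zero]
  positivity

lemma normSq_pos_of_im_conj_mul_ne_zero (h : (conj β * γ).im ≠ 0) : 0 < normSq β := by
  refine normSq_pos.2 fun hβ ↦ h ?_
  simp [hβ]

lemma integrable_inv_normSq_ofReal_mul_add (h : (conj β * γ).im ≠ 0) :
    Integrable fun x : ℝ ↦ (normSq (x * β + γ))⁻¹ := by
  simp only [normSq_ofReal_mul_add]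
  exact integrable_inv_quadratic (normSq_pos_of_im_conj_mul_ne_zero h)
    (discrim_normSq_ofReal_mul_add_neg h)

lemma integral_inv_normSq_ofReal_mul_add (h : (conj β * γ).im ≠ 0) :
    ∫ x : ℝ, (normSq (x * β + γ))⁻¹ = π / |(conj β * γ).im| := by
  simp only [normSq_ofReal_mul_add]
  rw [integral_inv_quadratic (normSq_pos_of_im_conj_mul_ne_zero h)
    (discrim_normSq_ofReal_mul_add_neg h), discrim_normSq_ofReal_mul_add,
    neg_neg, sqrt_sq_eq_abs, abs_mul, abs_two]
  field_simp

end AffineLine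

lemma integral_prod_symm_of_nonneg {α β : Type*} [MeasurableSpace α] [MeasurableSpace β]
    {μ : Measure α} {ν : Measure β} [SFinite μ] [SFinite ν] {f : α × β → ℝ} (hf : ∀ z, 0 ≤ f z)
    (hfm : AEStronglyMeasurable f (μ.prod ν)) (hx : ∀ᵐ y ∂ν, Integrable (fun x ↦ f (x, y)) μ)
    (hy : Integrable (fun y ↦ ∫ x, f (x, y) ∂μ) ν) :
    ∫ z, f z ∂μ.prod ν = ∫ y, ∫ x, f (x, y) ∂μ ∂ν := by
  refine integral_prod_symm f ((integrable_prod_iff' hfm).2 ⟨hx, ?_⟩)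
  simpa only [norm_of_nonneg (hf _)] using hy

theorem integral_inv_normSq_sub_mul_sub_sub {a b c d : ℂ} (ha : 0 < a.im)
    (hdisc : (b * c).im ^ 2 < 4 * a.im * d.im * (a.im * d.im + (b * c).re)) :
    ∫ v : ℝ × ℝ, (normSq ((v.1 - a) * (v.2 - d) - b * c))⁻¹ =
      2 * π ^ 2 / √(4 * a.im * d.im * (a.im * d.im + (b * c).re) - (b * c).im ^ 2) := by
  set B := (b * c).im - 2 * a.im * d.re
  set C := a.im * normSq d - (b * c * conj d).im
  have hd : discrim a.im B C =
      (b * c).im ^ 2 - 4 * a.im * d.im * (a.im * d.im + (b * c).re) := by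
    simp only [discrim, B, C, normSq_apply, mul_re, mul_im, conj_re, conj_im]
    ring
  have hneg : discrim a.im B C < 0 := by rw [hd]; linarith
  have hlin (x y : ℝ) :
      (x - a) * (y - d) - b * c = x * (y - d) + (-(a * (y - d)) - b * c) := by
    ring
  have him (y : ℝ) :
      (conj (y - d) * (-(a * (y - d)) - b * c)).im = -(a.im * y ^ 2 + B * y + C) := by
    simp only [B, C, normSq_apply, mul_re, mul_im, conj_re, conj_im, sub_re, sub_im, neg_re,
      neg_im, ofReal_re, ofReal_im]
    ring
  have hQ (y : ℝ) : (conj (y - d) * (-(a * (y - d)) - b * c)).im ≠ 0 := by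
    rw [him]
    exact neg_ne_zero.2 (quadratic_pos_of_discrim_neg ha hneg y).ne'
  have hinner (y : ℝ) :
      ∫ x : ℝ, (normSq ((x - a) * (y - d) - b * c))⁻¹ = π * (a.im * y ^ 2 + B * y + C)⁻¹ := by
    simp only [hlin _ y]
    rw [integral_inv_normSq_ofReal_mul_add (hQ y), him, abs_neg,
      abs_of_pos (quadratic_pos_of_discrim_neg ha hneg y), div_eq_mul_inv]
  rw [Measure.volume_eq_prod,
    integral_prod_symm_of_nonneg (fun v ↦ inv_nonneg.2 (normSq_nonneg _)) (by fun_prop)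
      (ae_of_all _ fun y ↦ by
        simpa only [hlin _ y] using integrable_inv_normSq_ofReal_mul_add (hQ y))
      (by simpa only [hinner] using (integrable_inv_quadratic ha hneg).const_mul π)]
  simp only [hinner]
  rw [integral_const_mul, integral_inv_quadratic ha hneg, hd, neg_sub]
  ring

lemma four_mul_sq_sub_normSq_le {t : ℝ} {b c : ℂ} (h : normSq (b - conj c) / 4 < t) :
    4 * (t - normSq (b - conj c) / 4) ^ 2 ≤ 4 * t * (t + (b * c).re) - (b * c).im ^ 2 := by
  have hsub : normSq (b - conj c) = normSq b + normSq c - 2 * (b * c).re := by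
    rw [normSq_sub, normSq_conj, conj_conj]
  have hmul : (b * c).re ^ 2 + (b * c).im ^ 2 = normSq b * normSq c := by
    rw [sq, sq, ← normSq_apply, normSq_mul]
  have hsum : 0 ≤ normSq b + normSq c := add_nonneg (normSq_nonneg b) (normSq_nonneg c)
  rw [hsub] at h ⊢
  nlinarith [mul_le_mul_of_nonneg_right h.le hsum, sq_nonneg (normSq b - normSq c)]

/-- Minami's two-by-two lemma: if `Im M > 0`, then
`∫∫ det Im[(diag(v₁,v₂) - M)⁻¹] dv₁ dv₂ ≤ π²`. -/
theorem minami_two_by_two_lemma (M : Matrix (Fin 2) (Fin 2) ℂ)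
    (hM : (matIm M).PosDef) :
    ∫ v : ℝ × ℝ,
        (Matrix.det (matIm ((Matrix.diagonal ![(v.1 : ℂ), (v.2 : ℂ)] - M)⁻¹))).re
      ≤ Real.pi ^ 2 := by
  set D := (matIm M).det.re
  set Δ := 4 * (M 0 0).im * (M 1 1).im * ((M 0 0).im * (M 1 1).im + (M 0 1 * M 1 0).re)
    - (M 0 1 * M 1 0).im ^ 2
  have hD : 0 < D := (pos_iff.1 hM.det_pos).1
  have hDΔ : 4 * D ^ 2 ≤ Δ := by
    simp only [D, re_det_matIm_fin_two] at hD ⊢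
    exact (four_mul_sq_sub_normSq_le (by linarith)).trans_eq (by ring)
  have hΔ : 0 < Δ := by nlinarith
  have hH (v : ℝ × ℝ) : (diagonal ![(v.1 : ℂ), (v.2 : ℂ)]).IsHermitian :=
    isHermitian_diagonal_of_self_adjoint _ (by ext i; fin_cases i <;> simp)
  have hdet (v : ℝ × ℝ) : (diagonal ![(v.1 : ℂ), (v.2 : ℂ)] - M).det =
      (v.1 - M 0 0) * (v.2 - M 1 1) - M 0 1 * M 1 0 := by
    simp [det_fin_two]
  calc _ = ∫ v : ℝ × ℝ, D * (normSq ((v.1 - M 0 0) * (v.2 - M 1 1) - M 0 1 * M 1 0))⁻¹ := by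
        congr 1 with v
        rw [re_det_matIm_nonsing_inv_sub (hH v) (isUnit_det_sub_of_posDef (hH v) hM), hdet,
          div_eq_mul_inv]
    _ = D * (2 * π ^ 2 / √Δ) := by
        rw [integral_const_mul, integral_inv_normSq_sub_mul_sub_sub
          (by simpa [matIm_apply_self] using hM.diag_pos (i := 0)) (sub_pos.1 hΔ)]
    _ ≤ π ^ 2 := by
        have h2D : 2 * D ≤ √Δ := le_sqrt_of_sq_le (by linarith)
        rw [mul_div_assoc', div_le_iff₀ (sqrt_pos.2 hΔ)]
        nlinarith [pi_pos]
end

section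
/- Let H be a self-adjoint operator on ℓ²(Λ) for a finite set Λ, and let x ≠ y in Λ. Let P_x, P_y be the orthogonal projections onto δ_x, δ_y, set Ĥ = H − v_x P_x − v_y P_y for real numbers v_x, v_y, and let z ∈ ℂ with Im z > 0. If the 2×2 matrix Ĝ with entries Ĝ(a,b) = ⟨δ_a, (Ĥ − z)^{-1} δ_b⟩ for a, b ∈ {x,y} is invertible, then the 2×2 matrix g with entries g(a,b) = ⟨δ_a, (H − z)^{-1} δ_b⟩ satisfies g = (diag(v_x, v_y) + Ĝ^{-1})^{-1} (Krein formula). -/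
/-!
Put `A = H - z` and `B = Ĥ - z`; since `Im z ≠ 0` lies off the real spectrum of the Hermitian
matrices `H` and `Ĥ`, both are invertible. Their difference is `v_x P_x + v_y P_y`, so the second
resolvent identity `A⁻¹ = B⁻¹ - B⁻¹ (A - B) A⁻¹`, read at the sites `x, y`, only involves entries
at those sites: `g = Ĝ - Ĝ D g` with `D = diag(v_x, v_y)`. Multiplying by `Ĝ⁻¹` gives
`(D + Ĝ⁻¹) g = 1`.
-/

open Matrix

namespace Matrix

theorem isHermitian_ofReal_smul_single_self {Λ 𝕜 : Type*} [DecidableEq Λ] [RCLike 𝕜] (r : ℝ)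
    (x : Λ) : ((r : 𝕜) • single x x (1 : 𝕜)).IsHermitian := by
  simp [IsHermitian]

variable {Λ ι R : Type*} [Fintype Λ] [DecidableEq Λ]

theorem IsHermitian.isUnit_sub_smul_one {𝕜 : Type*} [RCLike 𝕜] {M : Matrix Λ Λ 𝕜}
    (hM : M.IsHermitian) {z : 𝕜} (hz : RCLike.im z ≠ 0) : IsUnit (M - z • 1) := by
  have hz_notMem : z ∉ spectrum 𝕜 M := by
    rw [hM.spectrum_eq_image_range]
    rintro ⟨r, -, rfl⟩
    exact hz (RCLike.ofReal_im r)
  rwa [spectrum.mem_iff, not_not, Algebra.algebraMap_eq_smul_one, ← neg_sub,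
    IsUnit.neg_iff] at hz_notMem

variable [Fintype ι] [DecidableEq ι]

theorem submatrix_mul_sum_single_mul [CommSemiring R] (M N : Matrix Λ Λ R) (f : ι → Λ)
    (d : ι → R) :
    (M * (∑ i, d i • single (f i) (f i) 1) * N).submatrix f f
      = M.submatrix f f * diagonal d * N.submatrix f f := by
  ext a b
  simp [mul_apply, sum_apply, single_apply, Finset.mul_sum, Finset.sum_mul, ite_and,
    diagonal_apply]

theorem inv_submatrix_eq_of_eq_add_sum_single [CommRing R] {A B : Matrix Λ Λ R}
    (hA : IsUnit A) (hB : IsUnit B) (f : ι → Λ) (d : ι → R)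
    (hAB : A = B + ∑ i, d i • single (f i) (f i) 1) (hG : IsUnit (B⁻¹.submatrix f f)) :
    A⁻¹.submatrix f f = (diagonal d + (B⁻¹.submatrix f f)⁻¹)⁻¹ := by
  set G := B⁻¹.submatrix f f
  set g := A⁻¹.submatrix f f
  have hresolvent : g = G - G * diagonal d * g := by
    have hdiff : A - B = ∑ i, d i • single (f i) (f i) 1 := by rw [hAB, add_sub_cancel_left]
    have hcompressed := congrArg (submatrix · f f) (inv_sub_inv (iff_of_true hB hA))
    simp only [hdiff, submatrix_mul_sum_single_mul] at hcompressed
    rw [← hcompressed]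
    exact (sub_sub_cancel G g).symm
  have hGG : G⁻¹ * G = 1 := nonsing_inv_mul G ((isUnit_iff_isUnit_det G).mp hG)
  have hright : (diagonal d + G⁻¹) * g = 1 :=
    calc (diagonal d + G⁻¹) * g = diagonal d * g + G⁻¹ * (G - G * diagonal d * g) := by
          rw [add_mul, ← hresolvent]
      _ = 1 := by
          rw [mul_sub, ← mul_assoc, ← mul_assoc, hGG, one_mul, add_sub_cancel]
  exact (inv_eq_right_inv hright).symm

end Matrix

theorem krein_formula_general {Λ : Type*} [Fintype Λ] [DecidableEq Λ]
    (H : Matrix Λ Λ ℂ) (hH : H.IsHermitian)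
    (x y : Λ) (vx vy : ℝ) (z : ℂ) (hz : 0 < z.im)
    (Hhat : Matrix Λ Λ ℂ)
    (hHhat : Hhat = H - (vx : ℂ) • Matrix.single x x 1
        - (vy : ℂ) • Matrix.single y y 1)
    (Ghat g : Matrix (Fin 2) (Fin 2) ℂ)
    (hGhat : Ghat = Matrix.of fun a b => ((Hhat - z • 1)⁻¹) (![x, y] a) (![x, y] b))
    (hg : g = Matrix.of fun a b => ((H - z • 1)⁻¹) (![x, y] a) (![x, y] b))
    (hinv : IsUnit Ghat.det) :
    g = (Matrix.diagonal ![(vx : ℂ), (vy : ℂ)] + Ghat⁻¹)⁻¹ := by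
  have hHhat_herm : Hhat.IsHermitian := hHhat ▸
    (hH.sub (isHermitian_ofReal_smul_single_self vx x)).sub
      (isHermitian_ofReal_smul_single_self vy y)
  have hperturb : H - z • 1 = (Hhat - z • 1)
      + ∑ i, ![(vx : ℂ), (vy : ℂ)] i • single (![x, y] i) (![x, y] i) 1 := by
    rw [hHhat, Fin.sum_univ_two]
    simp only [cons_val_zero, cons_val_one]
    abel
  subst hg hGhat
  exact inv_submatrix_eq_of_eq_add_sum_single (hH.isUnit_sub_smul_one hz.ne')
    (hHhat_herm.isUnit_sub_smul_one hz.ne') ![x, y] _ hperturb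
    ((isUnit_iff_isUnit_det _).mpr hinv)

/-- Krein formula: for a self-adjoint `H` on `ℓ²(Λ)`, `Λ` finite, distinct sites
`x ≠ y`, `Ĥ = H − v_x P_x − v_y P_y` and `Im z > 0`, if the `2×2` matrix `Ĝ` of
entries of `(Ĥ − z)⁻¹` at `x,y` is invertible, then the corresponding matrix `g`
of `(H − z)⁻¹` satisfies `g = (diag(v_x,v_y) + Ĝ⁻¹)⁻¹`. -/
theorem krein_formula {Λ : Type*} [Fintype Λ] [DecidableEq Λ]
    (H : Matrix Λ Λ ℂ) (hH : H.IsHermitian)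
    (x y : Λ) (hxy : x ≠ y) (vx vy : ℝ) (z : ℂ) (hz : 0 < z.im)
    (Hhat : Matrix Λ Λ ℂ)
    (hHhat : Hhat = H - (vx : ℂ) • Matrix.single x x 1
        - (vy : ℂ) • Matrix.single y y 1)
    (Ghat g : Matrix (Fin 2) (Fin 2) ℂ)
    (hGhat : Ghat = Matrix.of fun a b => ((Hhat - z • 1)⁻¹) (![x, y] a) (![x, y] b))
    (hg : g = Matrix.of fun a b => ((H - z • 1)⁻¹) (![x, y] a) (![x, y] b))
    (hinv : IsUnit Ghat.det) :
    g = (Matrix.diagonal ![(vx : ℂ), (vy : ℂ)] + Ghat⁻¹)⁻¹ :=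
  krein_formula_general H hH x y vx vy z hz Hhat hHhat Ghat g hGhat hg hinv
end
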